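/- Let λ be an infinite cardinal and let s = (K,⪯,⌣,S^bs) be a semi-good non-forking λ-frame such that K satisfies amalgamation in λ⁺ and (K,⪯) is (λ,λ⁺)-tame. Then the lifted frame s⁺ satisfies uniqueness: if M ⪯ N are models in K_{λ⁺}, p,q ∈ S^bs(N) do not fork over M, and p↾M = q↾M, then p = q. -/

import Mathlib

universe u

open Set Cardinal

set_option autoImplicit false

/-- the old Mathlib (Dec 2024) definition of a limit ordinal, removed since -/
def Ordinal.IsLimit (o : Ordinal.{u}) : Prop :=
  o ≠ 0 ∧ ∀ a < o, Order.succ a < o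

/-- Abstract data for an abstract elementary class (AEC) together with an abstract
assignment of Galois types.  Models are identified with their carrier sets,
which are subsets of a fixed universe `α` of elements. -/
structure AECData (α : Type u) : Type (u + 1) where
  /-- the class of (carriers of) models -/
  K : Set (Set α)
  /-- the strong substructure relation `⪯` -/
  le : Set α → Set α → Prop
  /-- `emb f M N` : `f` is a `⪯`-embedding of the model `M` into the model `N` -/
  emb : (α → α) → Set α → Set α → Prop
  /-- the (abstract) collection of Galois types -/
  Tp : Type u
  /-- `tp a M N` : the Galois type of `a` over `M` as computed inside `N` -/
  tp : α → Set α → Set α → Tp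
  /-- restriction of a Galois type to a smaller model -/
  res : Tp → Set α → Tp
  le_mem : ∀ {M N : Set α}, le M N → M ∈ K ∧ N ∈ K
  le_refl : ∀ M ∈ K, le M M
  le_trans : ∀ {M N P : Set α}, le M N → le N P → le M P
  le_subset : ∀ {M N : Set α}, le M N → M ⊆ N
  coherence : ∀ {M N P : Set α}, le M P → le N P → M ⊆ N → le M N
  chain_union_le : ∀ {I : Type u} [LinearOrder I] [Nonempty I] (Ms : I → Set α),
    (∀ i j : I, i ≤ j → le (Ms i) (Ms j)) → ∀ i : I, le (Ms i) (⋃ j, Ms j)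
  smoothness : ∀ {I : Type u} [LinearOrder I] [Nonempty I] (Ms : I → Set α) (N : Set α),
    (∀ i j : I, i ≤ j → le (Ms i) (Ms j)) → (∀ i : I, le (Ms i) N) → le (⋃ j, Ms j) N
  emb_id : ∀ {M N : Set α}, le M N → emb id M N
  emb_inj : ∀ {f : α → α} {M N : Set α}, emb f M N → Set.InjOn f M
  emb_image_le : ∀ {f : α → α} {M N : Set α}, emb f M N → le (f '' M) N
  emb_le_left : ∀ {f : α → α} {M M' N : Set α}, emb f M N → le M' M → emb f M' N
  emb_le_right : ∀ {f : α → α} {M N N' : Set α}, emb f M N → le N N' → emb f M N'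
  emb_comp : ∀ {f g : α → α} {M N P : Set α}, emb f M N → emb g N P → emb (g ∘ f) M P
  tp_invariant : ∀ {f : α → α} {M N N' : Set α} {a : α},
    le M N → a ∈ N → emb f N N' → Set.EqOn f id M → tp (f a) M N' = tp a M N
  tp_mono : ∀ {M N N' : Set α} {a : α}, le M N → le N N' → a ∈ N → tp a M N' = tp a M N
  res_tp : ∀ {M₀ M N : Set α} {a : α},
    le M₀ M → le M N → a ∈ N → res (tp a M N) M₀ = tp a M₀ N

namespace AECData

variable {α : Type u}

/-- the models in `K` of cardinality exactly `lam` -/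
def inCard (D : AECData α) (lam : Cardinal.{u}) (M : Set α) : Prop :=
  M ∈ D.K ∧ Cardinal.mk M = lam

/-- the set of Galois types over a model `M` -/
def S (D : AECData α) (M : Set α) : Set D.Tp :=
  {p | ∃ (N : Set α) (a : α), D.le M N ∧ a ∈ N ∧ p = D.tp a M N}

/-- `(lam, lam⁺)`-tameness: types over models of cardinality `lam⁺` are determined by
their restrictions to `⪯`-submodels of cardinality `lam`. -/
def Tame (D : AECData α) (lam : Cardinal.{u}) : Prop :=
  ∀ M : Set α, D.inCard (Order.succ lam) M →
    ∀ p ∈ D.S M, ∀ q ∈ D.S M,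
      (∀ N : Set α, D.inCard lam N → D.le N M → D.res p N = D.res q N) → p = q

/-- the amalgamation property in cardinality `mu` -/
def AmalgIn (D : AECData α) (mu : Cardinal.{u}) : Prop :=
  ∀ M₀ M₁ M₂ : Set α, D.inCard mu M₀ → D.inCard mu M₁ → D.inCard mu M₂ →
    D.le M₀ M₁ → D.le M₀ M₂ →
    ∃ (N : Set α) (f : α → α), N ∈ D.K ∧ D.le M₁ N ∧ D.emb f M₂ N ∧ Set.EqOn f id M₀

/-- a filtration of a model `M` of cardinality `lam⁺`: an increasing continuous sequence
of models of cardinality `lam`, of length `lam⁺`, with union `M`. -/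
def IsFiltration (D : AECData α) (lam : Cardinal.{u}) (M : Set α)
    (Ms : Ordinal.{u} → Set α) : Prop :=
  (∀ β < (Order.succ lam).ord, D.inCard lam (Ms β)) ∧
  (∀ β γ : Ordinal.{u}, β ≤ γ → γ < (Order.succ lam).ord → D.le (Ms β) (Ms γ)) ∧
  (∀ β < (Order.succ lam).ord, β.IsLimit → Ms β = ⋃ γ ∈ Set.Iio β, Ms γ) ∧
  M = ⋃ γ ∈ Set.Iio (Order.succ lam).ord, Ms γ

end AECData

/-- A semi-good non-forking `lam`-frame `s = (K, ⪯, ⌣, S^bs)`. -/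
structure SemiGoodFrame {α : Type u} (D : AECData α) (lam : Cardinal.{u}) : Type u where
  infinite : ℵ₀ ≤ lam
  /-- `LST(K,⪯) ≤ lam` -/
  lst : ∀ N ∈ D.K, ∀ A : Set α, A ⊆ N →
    ∃ M ∈ D.K, A ⊆ M ∧ D.le M N ∧ Cardinal.mk M ≤ max (Cardinal.mk A) lam
  nonempty : ∃ M : Set α, D.inCard lam M
  amalgamation : D.AmalgIn lam
  jep : ∀ M₁ M₂ : Set α, D.inCard lam M₁ → D.inCard lam M₂ →
    ∃ (N : Set α) (f : α → α), D.inCard lam N ∧ D.le M₁ N ∧ D.emb f M₂ N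
  no_max : ∀ M : Set α, D.inCard lam M → ∃ N : Set α, D.inCard lam N ∧ D.le M N ∧ M ≠ N
  /-- the set of basic types over a model of cardinality `lam` -/
  Sbs : Set α → Set D.Tp
  /-- the non-forking relation `⌣(M₀, M₁, a, M₃)` -/
  dnf : Set α → Set α → α → Set α → Prop
  Sbs_sub : ∀ M : Set α, D.inCard lam M → ∀ p ∈ Sbs M,
    ∃ (N : Set α) (a : α), D.inCard lam N ∧ D.le M N ∧ a ∈ N \ M ∧ p = D.tp a M N
  Sbs_invariant : ∀ (f : α → α) (M N N' : Set α) (a : α), D.le M N → a ∈ N →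
    D.emb f N N' → D.tp a M N ∈ Sbs M → D.tp (f a) (f '' M) N' ∈ Sbs (f '' M)
  density : ∀ M N : Set α, D.inCard lam M → D.inCard lam N → D.le M N → M ≠ N →
    ∃ a ∈ N \ M, D.tp a M N ∈ Sbs M
  almost_stability : ∀ M : Set α, D.inCard lam M → Cardinal.mk (Sbs M) ≤ Order.succ lam
  dnf_mem : ∀ {M₀ M₁ : Set α} {a : α} {M₃ : Set α}, dnf M₀ M₁ a M₃ →
    D.inCard lam M₀ ∧ D.inCard lam M₁ ∧ D.inCard lam M₃ ∧
    D.le M₀ M₁ ∧ D.le M₁ M₃ ∧ a ∈ M₃ \ M₁ ∧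
    D.tp a M₀ M₃ ∈ Sbs M₀ ∧ D.tp a M₁ M₃ ∈ Sbs M₁
  dnf_invariant : ∀ {f : α → α} {M₀ M₁ : Set α} {a : α} {M₃ N : Set α},
    dnf M₀ M₁ a M₃ → D.emb f M₃ N → dnf (f '' M₀) (f '' M₁) (f a) (f '' M₃)
  dnf_mono : ∀ {M₀ M₀' M₁' M₁ : Set α} {a : α} {M₃ M₃s M₃' : Set α},
    dnf M₀ M₁ a M₃ → D.le M₀ M₀' → D.le M₀' M₁' → D.le M₁' M₁ →
    D.le M₃ M₃s → D.inCard lam M₃' → D.le M₃' M₃s → D.le M₁' M₃' → a ∈ M₃' →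
    dnf M₀' M₁' a M₃'
  local_character : ∀ δ : Ordinal.{u}, δ.IsLimit → δ < (Order.succ lam).ord →
    ∀ Ms : Ordinal.{u} → Set α,
    (∀ β γ : Ordinal.{u}, β ≤ γ → γ ≤ δ → D.le (Ms β) (Ms γ)) →
    (∀ β ≤ δ, Ordinal.IsLimit β → Ms β = ⋃ γ ∈ Set.Iio β, Ms γ) →
    (∀ β ≤ δ, D.inCard lam (Ms β)) →
    ∀ (N : Set α) (a : α), D.inCard lam N → D.le (Ms δ) N → a ∈ N \ Ms δ →
      D.tp a (Ms δ) N ∈ Sbs (Ms δ) → ∃ β < δ, dnf (Ms β) (Ms δ) a N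
  uniqueness : ∀ (M N N₁ N₂ : Set α) (a b : α), dnf M N a N₁ → dnf M N b N₂ →
    D.tp a M N₁ = D.tp b M N₂ → D.tp a N N₁ = D.tp b N N₂
  symmetry : ∀ (M₀ M₁ M₃ : Set α) (a₁ a₂ : α),
    D.inCard lam M₀ → D.inCard lam M₁ → D.inCard lam M₃ →
    D.le M₀ M₁ → D.le M₁ M₃ → a₁ ∈ M₁ → D.tp a₁ M₀ M₃ ∈ Sbs M₀ → dnf M₀ M₁ a₂ M₃ →
    ∃ M₂ M₃' : Set α, D.inCard lam M₂ ∧ D.inCard lam M₃' ∧ a₂ ∈ M₂ ∧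
      D.le M₀ M₂ ∧ D.le M₂ M₃' ∧ D.le M₃ M₃' ∧ dnf M₀ M₂ a₁ M₃'
  extension : ∀ (M N M' : Set α) (a : α), D.le M N → D.inCard lam N →
    D.le M M' → a ∈ M' → D.tp a M M' ∈ Sbs M →
    ∃ (N' : Set α) (b : α), D.inCard lam N' ∧ D.le N N' ∧ b ∈ N' ∧ dnf M N b N' ∧
      D.tp b M N' = D.tp a M M'
  continuity : ∀ δ : Ordinal.{u}, δ.IsLimit → δ < (Order.succ lam).ord →
    ∀ Ms : Ordinal.{u} → Set α,
    (∀ β γ : Ordinal.{u}, β ≤ γ → γ ≤ δ → D.le (Ms β) (Ms γ)) →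
    (∀ β ≤ δ, Ordinal.IsLimit β → Ms β = ⋃ γ ∈ Set.Iio β, Ms γ) →
    (∀ β ≤ δ, D.inCard lam (Ms β)) →
    ∀ (N : Set α) (a : α), D.inCard lam N → D.le (Ms δ) N → a ∈ N →
      (∀ β : Ordinal.{u}, 0 < β → β < δ → dnf (Ms 0) (Ms β) a N) →
      dnf (Ms 0) (Ms δ) a N

namespace SemiGoodFrame

variable {α : Type u} {D : AECData α} {lam : Cardinal.{u}}

/-- `tp a N M₂` does not fork over `N₀` inside the frame (via a small witness model). -/
def nfk (F : SemiGoodFrame D lam) (N₀ N : Set α) (a : α) (M₂ : Set α) : Prop :=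
  ∃ M' : Set α, D.inCard lam M' ∧ D.le N M' ∧ D.le M' M₂ ∧ a ∈ M' ∧ F.dnf N₀ N a M'

/-- the lifted non-forking relation: the type `tp a M₁ M₂` does not fork over `M₀`
(`M₀ ⪯ M₁` models of cardinality `≥ lam`). -/
def nfLift (F : SemiGoodFrame D lam) (M₀ : Set α) (a : α) (M₁ M₂ : Set α) : Prop :=
  D.le M₀ M₁ ∧ D.le M₁ M₂ ∧ a ∈ M₂ \ M₁ ∧
  ∃ N₀ : Set α, D.inCard lam N₀ ∧ D.le N₀ M₀ ∧
    ∀ N : Set α, D.inCard lam N → D.le N₀ N → D.le N M₁ → F.nfk N₀ N a M₂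

/-- the Galois type `p` (a type over `M₁`) does not fork over `M₀`, in the lifted sense. -/
def TpNF (F : SemiGoodFrame D lam) (M₀ M₁ : Set α) (p : D.Tp) : Prop :=
  ∃ (a : α) (M₂ : Set α), p = D.tp a M₁ M₂ ∧ F.nfLift M₀ a M₁ M₂

/-- basic types over models of cardinality `> lam`: the types that do not fork over some
`⪯`-submodel of cardinality `lam`. -/
def SbsUp (F : SemiGoodFrame D lam) (M : Set α) : Set D.Tp :=
  {p | ∃ N₀ : Set α, D.inCard lam N₀ ∧ D.le N₀ M ∧ F.TpNF N₀ M p}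

/-- symmetry for the lifted frame `s⁺` on models of cardinality `lam⁺` -/
def SymmetryPlus (F : SemiGoodFrame D lam) : Prop :=
  ∀ (M₀ M₁ M₃ : Set α) (a₁ a₂ : α),
    D.inCard (Order.succ lam) M₀ → D.inCard (Order.succ lam) M₁ →
    D.inCard (Order.succ lam) M₃ →
    D.le M₀ M₁ → D.le M₁ M₃ → a₁ ∈ M₁ → D.tp a₁ M₀ M₃ ∈ F.SbsUp M₀ →
    F.nfLift M₀ a₂ M₁ M₃ →
    ∃ M₂ M₃' : Set α, D.inCard (Order.succ lam) M₂ ∧ D.inCard (Order.succ lam) M₃' ∧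
      a₂ ∈ M₂ ∧ D.le M₀ M₂ ∧ D.le M₂ M₃' ∧ D.le M₃ M₃' ∧ F.nfLift M₀ a₁ M₂ M₃'

/-- `s⁺` is a good non-forking `lam⁺`-frame. -/
structure GoodPlus (F : SemiGoodFrame D lam) : Prop where
  nonempty : ∃ M : Set α, D.inCard (Order.succ lam) M
  amalgamation : D.AmalgIn (Order.succ lam)
  jep : ∀ M₁ M₂ : Set α, D.inCard (Order.succ lam) M₁ → D.inCard (Order.succ lam) M₂ →
    ∃ (N : Set α) (f : α → α), D.inCard (Order.succ lam) N ∧ D.le M₁ N ∧ D.emb f M₂ N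
  no_max : ∀ M : Set α, D.inCard (Order.succ lam) M →
    ∃ N : Set α, D.inCard (Order.succ lam) N ∧ D.le M N ∧ M ≠ N
  density : ∀ M N : Set α, D.inCard (Order.succ lam) M → D.inCard (Order.succ lam) N →
    D.le M N → M ≠ N → ∃ a ∈ N \ M, D.tp a M N ∈ F.SbsUp M
  stability : ∀ M : Set α, D.inCard (Order.succ lam) M →
    Cardinal.mk (F.SbsUp M) ≤ Order.succ lam
  invariance : ∀ (f : α → α) (M N N' : Set α) (a : α), D.le M N → a ∈ N →
    D.emb f N N' → D.tp a M N ∈ F.SbsUp M → D.tp (f a) (f '' M) N' ∈ F.SbsUp (f '' M)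
  monotonicity : ∀ (M₀ M₁ : Set α) (a : α) (M₂ M₃ : Set α),
    D.inCard (Order.succ lam) M₁ → D.le M₀ M₁ → D.le M₁ M₂ → F.nfLift M₀ a M₂ M₃ →
    F.nfLift M₁ a M₂ M₃ ∧ F.nfLift M₀ a M₁ M₃
  local_character : ∀ δ : Ordinal.{u}, δ.IsLimit →
    ∀ Ms : Ordinal.{u} → Set α,
    (∀ β γ : Ordinal.{u}, β ≤ γ → γ ≤ δ → D.le (Ms β) (Ms γ)) →
    (∀ β ≤ δ, Ordinal.IsLimit β → Ms β = ⋃ γ ∈ Set.Iio β, Ms γ) →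
    (∀ β ≤ δ, D.inCard (Order.succ lam) (Ms β)) →
    ∀ (N : Set α) (a : α), D.inCard (Order.succ lam) N → D.le (Ms δ) N →
      a ∈ N \ Ms δ → D.tp a (Ms δ) N ∈ F.SbsUp (Ms δ) →
      ∃ β < δ, F.nfLift (Ms β) a (Ms δ) N
  uniqueness : ∀ (M N : Set α) (p q : D.Tp),
    D.inCard (Order.succ lam) M → D.inCard (Order.succ lam) N → D.le M N →
    F.TpNF M N p → F.TpNF M N q → D.res p M = D.res q M → p = q
  symmetry : F.SymmetryPlus
  extension : ∀ (M N : Set α) (p : D.Tp),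
    D.inCard (Order.succ lam) M → D.inCard (Order.succ lam) N → D.le M N →
    p ∈ F.SbsUp M → ∃ q : D.Tp, q ∈ F.SbsUp N ∧ F.TpNF M N q ∧ D.res q M = p
  continuity : ∀ δ : Ordinal.{u}, δ.IsLimit →
    ∀ Ms : Ordinal.{u} → Set α,
    (∀ β γ : Ordinal.{u}, β ≤ γ → γ ≤ δ → D.le (Ms β) (Ms γ)) →
    (∀ β ≤ δ, Ordinal.IsLimit β → Ms β = ⋃ γ ∈ Set.Iio β, Ms γ) →
    (∀ β ≤ δ, D.inCard (Order.succ lam) (Ms β)) →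
    ∀ (N : Set α) (a : α), N ∈ D.K → D.le (Ms δ) N → a ∈ N \ Ms δ →
      (∀ β : Ordinal.{u}, 0 < β → β < δ → F.nfLift (Ms 0) a (Ms β) N) →
      F.nfLift (Ms 0) a (Ms δ) N

/-- Definition 1.6(a): the sequence `⟨Ms β, as β : β < o⟩⌢⟨Ms o⟩` is independent over `M`. -/
def IndepOver (F : SemiGoodFrame D lam) (M : Set α) (Ms : Ordinal.{u} → Set α)
    (as : Ordinal.{u} → α) (o : Ordinal.{u}) : Prop :=
  (∀ β ≤ o, Ms β ∈ D.K) ∧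
  (∀ β γ : Ordinal.{u}, β ≤ γ → γ ≤ o → D.le (Ms β) (Ms γ)) ∧
  (∀ β ≤ o, Ordinal.IsLimit β → Ms β = ⋃ γ ∈ Set.Iio β, Ms γ) ∧
  D.le M (Ms 0) ∧
  ∀ β < o, F.nfLift M (as β) (Ms β) (Ms (β + 1))

/-- Definition 1.6(b): the sequence `⟨as β : β < o⟩` is independent in `(M, M₀, N)`. -/
def IndepIn3 (F : SemiGoodFrame D lam) (M M₀ N : Set α) (as : Ordinal.{u} → α)
    (o : Ordinal.{u}) : Prop :=
  D.le M M₀ ∧ D.le M₀ N ∧ (∀ β < o, as β ∈ N \ M) ∧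
  ∃ (Ms : Ordinal.{u} → Set α) (Nplus : Set α),
    Ms 0 = M₀ ∧ F.IndepOver M Ms as o ∧ Nplus ∈ D.K ∧ D.le N Nplus ∧ D.le (Ms o) Nplus

/-- `⟨as β : β < o⟩` is independent in `(M, N)`, i.e. in `(M, M, N)`. -/
def IndepIn (F : SemiGoodFrame D lam) (M N : Set α) (as : Ordinal.{u} → α)
    (o : Ordinal.{u}) : Prop :=
  F.IndepIn3 M M N as o

/-- a set `J` is independent in `(M, N)` if some enumeration of it is. -/
def IndepSet (F : SemiGoodFrame D lam) (M N : Set α) (J : Set α) : Prop :=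
  ∃ (o : Ordinal.{u}) (as : Ordinal.{u} → α),
    (∀ β < o, as β ∈ J) ∧ (∀ x ∈ J, ∃ β < o, as β = x) ∧
    (∀ β γ : Ordinal.{u}, β < o → γ < o → as β = as γ → β = γ) ∧
    F.IndepIn M N as o

/-- the `lam⁺`-continuity of serial independence property. -/
def ContSerialIndep (F : SemiGoodFrame D lam) : Prop :=
  ∀ βs : Ordinal.{u}, βs < (Order.succ lam).ord →
  ∀ M N : Set α, D.inCard (Order.succ lam) M → D.inCard (Order.succ lam) N → D.le M N →
  ∀ Ms : Ordinal.{u} → Set α, D.IsFiltration lam M Ms →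
  ∀ as : Ordinal.{u} → α,
    (∀ γ < (Order.succ lam).ord, F.IndepIn (Ms γ) N as βs) →
    F.IndepIn M N as βs

end SemiGoodFrame

section NF

variable {α : Type u} {D : AECData α} {lam : Cardinal.{u}}

/-- `⊗_NF`: the axioms of a non-forking relation on quadruples of models of
cardinality `lam`. -/
structure IsNFRel (F : SemiGoodFrame D lam)
    (NF : Set α → Set α → Set α → Set α → Prop) : Prop where
  mem : ∀ {M₀ M₁ M₂ M₃ : Set α}, NF M₀ M₁ M₂ M₃ →
    D.inCard lam M₀ ∧ D.inCard lam M₁ ∧ D.inCard lam M₂ ∧ D.inCard lam M₃ ∧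
    D.le M₀ M₁ ∧ D.le M₁ M₃ ∧ D.le M₀ M₂ ∧ D.le M₂ M₃ ∧ M₁ ∩ M₂ = M₀
  mono : ∀ {M₀ M₁ M₂ M₃ N₁ N₂ N₃ Ns : Set α}, NF M₀ M₁ M₂ M₃ →
    D.le N₁ M₁ → D.le N₂ M₂ → D.le M₀ N₁ → D.le M₀ N₂ →
    D.le N₁ N₃ → D.le N₂ N₃ → D.inCard lam N₃ →
    D.le M₃ Ns → D.le N₃ Ns → NF M₀ N₁ N₂ N₃
  ext : ∀ {N₀ N₁ N₂ : Set α}, D.inCard lam N₀ → D.inCard lam N₁ → D.inCard lam N₂ →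
    D.le N₀ N₁ → D.le N₀ N₂ → N₁ ∩ N₂ = N₀ →
    ∃ N₃ : Set α, D.inCard lam N₃ ∧ NF N₀ N₁ N₂ N₃
  weak_uniq : ∀ {N₀ N₁ N₂ Na Nb : Set α}, NF N₀ N₁ N₂ Na → NF N₀ N₁ N₂ Nb →
    ∃ (N : Set α) (f : α → α), N ∈ D.K ∧ D.le Na N ∧ D.emb f Nb N ∧
      Set.EqOn f id (N₁ ∪ N₂)
  symm : ∀ M₀ M₁ M₂ M₃ : Set α, NF M₀ M₁ M₂ M₃ ↔ NF M₀ M₂ M₁ M₃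
  long_trans : ∀ (δ : Ordinal.{u}) (Ma Mb : Ordinal.{u} → Set α),
    (∀ β γ : Ordinal.{u}, β ≤ γ → γ ≤ δ → D.le (Ma β) (Ma γ)) →
    (∀ β γ : Ordinal.{u}, β ≤ γ → γ ≤ δ → D.le (Mb β) (Mb γ)) →
    (∀ β ≤ δ, Ordinal.IsLimit β → Ma β = ⋃ γ ∈ Set.Iio β, Ma γ) →
    (∀ β ≤ δ, Ordinal.IsLimit β → Mb β = ⋃ γ ∈ Set.Iio β, Mb γ) →
    (∀ β < δ, NF (Ma β) (Ma (β + 1)) (Mb β) (Mb (β + 1))) →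
    NF (Ma 0) (Ma δ) (Mb 0) (Mb δ)
  iso : ∀ {f : α → α} {M₀ M₁ M₂ M₃ N : Set α}, NF M₀ M₁ M₂ M₃ → D.emb f M₃ N →
    NF (f '' M₀) (f '' M₁) (f '' M₂) (f '' M₃)

/-- the relation `NF` respects the frame `s`. -/
def Respects (F : SemiGoodFrame D lam)
    (NF : Set α → Set α → Set α → Set α → Prop) : Prop :=
  ∀ (M₀ M₁ M₂ M₃ : Set α) (a : α), NF M₀ M₁ M₂ M₃ → a ∈ M₁ \ M₀ →
    D.tp a M₀ M₁ ∈ F.Sbs M₀ → F.dnf M₀ M₂ a M₃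

/-- `NF-hat(N₀, N₁, M₀, M₁)`:  `N₀, N₁ ∈ K_lam`, `M₀, M₁ ∈ K_{lam⁺}` and there are
filtrations of `M₀` and `M₁` starting with `N₀` and `N₁` linked by `NF`. -/
def NFhat (D : AECData α) (lam : Cardinal.{u})
    (NF : Set α → Set α → Set α → Set α → Prop) (N₀ N₁ M₀ M₁ : Set α) : Prop :=
  D.inCard lam N₀ ∧ D.inCard lam N₁ ∧
  D.inCard (Order.succ lam) M₀ ∧ D.inCard (Order.succ lam) M₁ ∧
  ∃ F₀ F₁ : Ordinal.{u} → Set α,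
    D.IsFiltration lam M₀ F₀ ∧ D.IsFiltration lam M₁ F₁ ∧
    F₀ 0 = N₀ ∧ F₁ 0 = N₁ ∧
    ∀ β < (Order.succ lam).ord, NF (F₀ β) (F₁ β) (F₀ (β + 1)) (F₁ (β + 1))

/-- the relation `M₀ ⪯^NF_{lam⁺} M₁`. -/
def leNF (D : AECData α) (lam : Cardinal.{u})
    (NF : Set α → Set α → Set α → Set α → Prop) (M₀ M₁ : Set α) : Prop :=
  D.le M₀ M₁ ∧ ∃ N₀ N₁ : Set α, NFhat D lam NF N₀ N₁ M₀ M₁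

/-- `E` is a club (closed unbounded set) of the ordinal `o`. -/
def IsClubBelow (o : Ordinal.{u}) (E : Set Ordinal.{u}) : Prop :=
  E ⊆ Set.Iio o ∧ (∀ β < o, ∃ γ ∈ E, β ≤ γ) ∧
  ∀ β < o, β.IsLimit → (∀ γ < β, ∃ δ ∈ E, γ < δ ∧ δ < β) → β ∈ E

/-- membership in the class `A` of pairs `(M, M⁺)` of models of cardinality `lam⁺`
with `M ⪯ M⁺`. -/
def memA (D : AECData α) (lam : Cardinal.{u}) (M Mp : Set α) : Prop :=
  D.inCard (Order.succ lam) M ∧ D.inCard (Order.succ lam) Mp ∧ D.le M Mp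

/-- the strict partial order `<_A` on pairs: `(M₁, M₁⁺) <_A (M₂, M₂⁺)`. -/
def ltA (D : AECData α) (lam : Cardinal.{u})
    (NF : Set α → Set α → Set α → Set α → Prop) (M₁ M₁p M₂ M₂p : Set α) : Prop :=
  leNF D lam NF M₁ M₂ ∧ D.le M₁p M₂p ∧ M₂ ∩ M₁p ≠ M₁

end NF

/-- Two `⪯`-submodels of cardinality `lam` of a model `M` can be joined by a common
`⪯`-extension of cardinality `lam` inside `M`. -/
lemma small_sup {α : Type u} {D : AECData α} {lam : Cardinal.{u}}
    (F : SemiGoodFrame D lam) {M A B : Set α} (hM : M ∈ D.K)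
    (hA : D.inCard lam A) (hB : D.inCard lam B)
    (hAle : D.le A M) (hBle : D.le B M) :
    ∃ C : Set α, D.inCard lam C ∧ D.le A C ∧ D.le B C ∧ D.le C M := by
  obtain ⟨C, hCK, hsub, hCle, hcard⟩ := F.lst M hM (A ∪ B)
    (union_subset (D.le_subset hAle) (D.le_subset hBle))
  have hABcard : Cardinal.mk ↥(A ∪ B) ≤ lam := by
    calc Cardinal.mk ↥(A ∪ B) ≤ Cardinal.mk A + Cardinal.mk B := Cardinal.mk_union_le A B
    _ = lam := by rw [hA.2, hB.2, Cardinal.add_eq_self F.infinite]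
  have hle : Cardinal.mk C ≤ lam := le_trans hcard (max_le hABcard le_rfl)
  have hge : lam ≤ Cardinal.mk C := hA.2 ▸ Cardinal.mk_le_mk_of_subset
    (subset_trans subset_union_left hsub)
  exact ⟨C, ⟨hCK, le_antisymm hle hge⟩,
    D.coherence hAle hCle (subset_trans subset_union_left hsub),
    D.coherence hBle hCle (subset_trans subset_union_right hsub), hCle⟩

/-- the lifted frame `s⁺` satisfies uniqueness. -/
theorem stmt1 {α : Type u} (D : AECData α) (lam : Cardinal.{u})
    (F : SemiGoodFrame D lam)
    (hAmalg : D.AmalgIn (Order.succ lam)) (hTame : D.Tame lam)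
    (M N : Set α) (p q : D.Tp)
    (hM : D.inCard (Order.succ lam) M) (hN : D.inCard (Order.succ lam) N)
    (hMN : D.le M N)
    (hp : p ∈ F.SbsUp N) (hq : q ∈ F.SbsUp N)
    (hpM : F.TpNF M N p) (hqM : F.TpNF M N q)
    (hres : D.res p M = D.res q M) :
    p = q := by
  obtain ⟨a, M₂, hpa, _, hleNM₂, haM₂, N₀p, hN₀p, hN₀pM, hwa⟩ := hpM
  obtain ⟨b, M₃, hqb, _, hleNM₃, hbM₃, N₀q, hN₀q, hN₀qM, hwb⟩ := hqM
  have haM₂' : a ∈ M₂ := haM₂.1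
  have hbM₃' : b ∈ M₃ := hbM₃.1
  have hMM₂ : D.le M M₂ := D.le_trans hMN hleNM₂
  have hMM₃ : D.le M M₃ := D.le_trans hMN hleNM₃
  -- a common small base M'' ⪯ M above both witnesses
  obtain ⟨M'', hM''card, hN₀pM'', hN₀qM'', hM''M⟩ :=
    small_sup F hM.1 hN₀p hN₀q hN₀pM hN₀qM
  have hM''N : D.le M'' N := D.le_trans hM''M hMN
  -- the restrictions of p and q to M'' agree
  have hresPM : D.res p M = D.tp a M M₂ := by rw [hpa]; exact D.res_tp hMN hleNM₂ haM₂'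
  have hresQM : D.res q M = D.tp b M M₃ := by rw [hqb]; exact D.res_tp hMN hleNM₃ hbM₃'
  have key : D.tp a M'' M₂ = D.tp b M'' M₃ := by
    rw [← D.res_tp hM''M hMM₂ haM₂', ← D.res_tp hM''M hMM₃ hbM₃',
      ← hresPM, ← hresQM, hres]
  -- apply tameness
  refine hTame N hN p ⟨M₂, a, hleNM₂, haM₂', hpa⟩ q ⟨M₃, b, hleNM₃, hbM₃', hqb⟩ ?_
  intro N' hN' hN'N
  -- a small N'' ⪯ N above N' and M''
  obtain ⟨N'', hN''card, hN'N'', hM''N'', hN''N⟩ :=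
    small_sup F hN.1 hN' hM''card hN'N hM''N
  have hN''K : N'' ∈ D.K := (D.le_mem hN''N).1
  -- witnessing small models for non-forking of a and b over N''
  obtain ⟨Ma, hMacard, hN''Ma, hMaM₂, haMa, hdnfa⟩ :=
    hwa N'' hN''card (D.le_trans hN₀pM'' hM''N'') hN''N
  obtain ⟨Mb, hMbcard, hN''Mb, hMbM₃, hbMb, hdnfb⟩ :=
    hwb N'' hN''card (D.le_trans hN₀qM'' hM''N'') hN''N
  have hMaK : Ma ∈ D.K := (D.le_mem hMaM₂).1
  have hMbK : Mb ∈ D.K := (D.le_mem hMbM₃).1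
  -- move the base of non-forking up to M''
  have hdnfa' : F.dnf M'' N'' a Ma :=
    F.dnf_mono hdnfa hN₀pM'' hM''N'' (D.le_refl N'' hN''K) (D.le_refl Ma hMaK)
      hMacard (D.le_refl Ma hMaK) hN''Ma haMa
  have hdnfb' : F.dnf M'' N'' b Mb :=
    F.dnf_mono hdnfb hN₀qM'' hM''N'' (D.le_refl N'' hN''K) (D.le_refl Mb hMbK)
      hMbcard (D.le_refl Mb hMbK) hN''Mb hbMb
  -- frame uniqueness over the common base M''
  have ha1 : D.tp a M'' M₂ = D.tp a M'' Ma :=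
    D.tp_mono (D.le_trans hM''N'' hN''Ma) hMaM₂ haMa
  have hb1 : D.tp b M'' M₃ = D.tp b M'' Mb :=
    D.tp_mono (D.le_trans hM''N'' hN''Mb) hMbM₃ hbMb
  have huniq : D.tp a N'' Ma = D.tp b N'' Mb :=
    F.uniqueness M'' N'' Ma Mb a b hdnfa' hdnfb' (by rw [← ha1, ← hb1]; exact key)
  have htpa : D.tp a N'' M₂ = D.tp a N'' Ma := D.tp_mono hN''Ma hMaM₂ haMa
  have htpb : D.tp b N'' M₃ = D.tp b N'' Mb := D.tp_mono hN''Mb hMbM₃ hbMb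
  have hN''M₂ : D.le N'' M₂ := D.le_trans hN''N hleNM₂
  have hN''M₃ : D.le N'' M₃ := D.le_trans hN''N hleNM₃
  -- conclude the restrictions to N' agree
  rw [hpa, hqb, D.res_tp hN'N hleNM₂ haM₂', D.res_tp hN'N hleNM₃ hbM₃',
    ← D.res_tp hN'N'' hN''M₂ haM₂', ← D.res_tp hN'N'' hN''M₃ hbM₃',
    htpa, htpb, huniq]
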